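/- Let s ∈ ℕ and let T be the set of all 1-Lipschitz functions f : ℝ^s → ℝ with f(0) = 0. For 0 < δ ≤ 1 define the norm ‖f‖_(δ) = sup_{x∈ℝ^s} |f(x)|/(‖x‖₂^{1+δ} + 1) on T. Then for all ε > 0 and 0 < δ ≤ 1, log N(T, ‖·‖_(δ), ε) ≤ (C√s/ε)^s · (1/δ), where C ≥ 1 is a universal constant. -/

import Mathlib

/-!
Work one dyadic scale at a time. Where `‖x‖ < 2 ^ (k + 1)`, the weight is at least
`2 ^ ((1 + δ) k)`, so it suffices to know `f` there up to an error `ε 2 ^ ((1 + δ) k)`, that is,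
to know the rounded values `round (f p / h)` at the points `p` of a lattice of mesh
`h ≈ ε 2 ^ ((1 + δ) k) / √s` in a box of radius `2 ^ (k + 1)`. Since `f` is 1-Lipschitz and
`f 0 = 0`, these rounded values are determined by their increments along lattice paths to the
origin, each in `{-2, …, 2}`. Beyond radius `2 ^ (K + 1)`, where `(2 ^ δ) ^ K ≈ 2 / ε`, the trivial
bound `|f x - g x| ≤ 2 ‖x‖` is already below `ε ‖x‖ ^ (1 + δ)`. Scale `k` carries about
`(C √s / ε) ^ s 2 ^ (-δ k s)` lattice points, and summing this geometric series over `k` gives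
`log N ≲ (C √s / ε) ^ s / δ`.
-/

open scoped ENNReal

noncomputable section

def coverN {T : Type*} (ρ : T → T → ℝ) (ε : ℝ) : ℝ≥0∞ :=
  ⨅ S ∈ {S : Set T | S.Finite ∧ ∀ t, ∃ s ∈ S, ρ t s ≤ ε}, (S.ncard : ℝ≥0∞)

local notation "ℝ^" s:max => EuclideanSpace ℝ (Fin s)

section Covering

variable {T : Type*} {ρ : T → T → ℝ} {ε : ℝ}

theorem coverN_le_ncard {S : Set T} (hS : S.Finite) (hcov : ∀ t, ∃ s ∈ S, ρ t s ≤ ε) :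
    coverN ρ ε ≤ S.ncard :=
  iInf₂_le S ⟨hS, hcov⟩

theorem coverN_le_card {α : Type*} (A : Finset α) (D : T → α) (hDA : ∀ f, D f ∈ A)
    (hD : ∀ f g, D f = D g → ρ f g ≤ ε) : coverN ρ ε ≤ A.card := by
  have hrange : Set.range D ⊆ A := Set.range_subset_iff.2 hDA
  have : Finite (Set.range D) := (A.finite_toSet.subset hrange).to_subtype
  let r : Set.range D → T := fun v => v.2.choose
  have hr : ∀ v, D (r v) = v := fun v => v.2.choose_spec
  refine (coverN_le_ncard (Set.finite_range r)
    fun f => ⟨r ⟨D f, f, rfl⟩, Set.mem_range_self _, hD _ _ (hr ⟨D f, f, rfl⟩).symm⟩).trans ?_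
  calc ((Set.range r).ncard : ℝ≥0∞) ≤ (Set.range D).ncard := by
        exact_mod_cast Finite.card_range_le r
    _ ≤ A.card := by
        rw [← Set.ncard_coe_finset]
        exact_mod_cast Set.ncard_le_ncard hrange

end Covering

section WeightedDist

variable {E : Type*} [NormedAddCommGroup E]

def weightedDist (δ : ℝ) (f g : E → ℝ) : ℝ :=
  ⨆ x, |f x - g x| / (‖x‖ ^ (1 + δ) + 1)

theorem weightedDist_le {δ ε : ℝ} {f g : E → ℝ}
    (h : ∀ x, |f x - g x| ≤ ε * (‖x‖ ^ (1 + δ) + 1)) : weightedDist δ f g ≤ ε :=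
  ciSup_le fun x => (div_le_iff₀ (by positivity)).2 (h x)

theorem LipschitzWith.abs_sub_le {f : E → ℝ} (hf : LipschitzWith 1 f) (x y : E) :
    |f x - f y| ≤ ‖x - y‖ := by
  simpa using hf.norm_sub_le x y

theorem LipschitzWith.abs_le_norm {f : E → ℝ} (hf : LipschitzWith 1 f) (hf0 : f 0 = 0) (x : E) :
    |f x| ≤ ‖x‖ := by
  simpa [hf0] using hf.abs_sub_le x 0

end WeightedDist

theorem max_one_rpow_le {t p : ℝ} (ht : 0 ≤ t) : max t 1 ^ p ≤ t ^ p + 1 := by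
  rcases le_total t 1 with h | h
  · rw [max_eq_right h, Real.one_rpow]
    linarith [Real.rpow_nonneg ht p]
  · rw [max_eq_left h]
    linarith

theorem le_rpow_one_add_add_one {t δ : ℝ} (ht : 0 ≤ t) (hδ : 0 ≤ δ) : t ≤ t ^ (1 + δ) + 1 :=
  calc t ≤ max t 1 := le_max_left t 1
    _ ≤ max t 1 ^ (1 + δ) := Real.self_le_rpow_of_one_le (le_max_right t 1) (by linarith)
    _ ≤ t ^ (1 + δ) + 1 := max_one_rpow_le ht

theorem two_pow_rpow_one_add (k : ℕ) (δ : ℝ) : ((2 : ℝ) ^ k) ^ (1 + δ) = 2 ^ k * (2 ^ δ) ^ k := by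
  rw [Real.rpow_add (by positivity), Real.rpow_one, Real.rpow_pow_comm zero_le_two]

theorem one_add_half_le_two_rpow {δ : ℝ} (hδ : 0 ≤ δ) : 1 + δ / 2 ≤ (2 : ℝ) ^ δ := by
  rw [Real.rpow_def_of_pos two_pos]
  nlinarith [Real.add_one_le_exp (Real.log 2 * δ), Real.log_two_gt_d9]

theorem exists_pow_mem_Icc {Q c : ℝ} (hQ1 : 1 < Q) (hQ2 : Q ≤ 2) (hc : 1 ≤ c) :
    ∃ K : ℕ, c ≤ Q ^ K ∧ Q ^ K ≤ 2 * c := by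
  obtain ⟨n, hn, hn1⟩ := exists_nat_pow_near hc hQ1
  refine ⟨n + 1, hn1.le, ?_⟩
  rw [pow_succ]
  nlinarith

theorem exists_dyadic_scale {t : ℝ} {K : ℕ} (ht : t < 2 ^ (K + 1)) :
    ∃ k ≤ K, t < 2 ^ (k + 1) ∧ (2 : ℝ) ^ k ≤ max t 1 := by
  classical
  have hex : ∃ k : ℕ, t < 2 ^ (k + 1) := ⟨K, ht⟩
  refine ⟨Nat.find hex, Nat.find_min' hex ht, Nat.find_spec hex, ?_⟩
  by_cases h0 : Nat.find hex = 0
  · simp [h0]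
  · have hmin := Nat.find_min hex (m := Nat.find hex - 1) (by omega)
    rw [Nat.sub_add_cancel (Nat.one_le_iff_ne_zero.2 h0)] at hmin
    exact le_max_of_le_left (not_lt.1 hmin)

theorem two_mul_le_of_two_pow_le {t δ ε : ℝ} {K : ℕ} (hδ : 0 ≤ δ) (hε : 0 < ε)
    (hK : 2 / ε ≤ (2 ^ δ) ^ K) (ht : 2 ^ K ≤ t) : 2 * t ≤ ε * (t ^ (1 + δ) + 1) := by
  have ht0 : 0 < t := lt_of_lt_of_le (by positivity) ht
  have htδ : 2 / ε ≤ t ^ δ := by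
    rw [Real.rpow_pow_comm zero_le_two] at hK
    exact hK.trans (Real.rpow_le_rpow (by positivity) ht hδ)
  rw [div_le_iff₀ hε] at htδ
  rw [Real.rpow_add ht0, Real.rpow_one]
  nlinarith

theorem Int.natAbs_sub_sign_lt {a : ℤ} (ha : a ≠ 0) : (a - a.sign).natAbs < a.natAbs := by
  rcases lt_or_gt_of_ne ha with h | h
  · rw [Int.sign_eq_neg_one_of_neg h]; omega
  · rw [Int.sign_eq_one_of_pos h]; omega

theorem natAbs_round_le {y : ℝ} {N : ℕ} (hy : |y| ≤ N) : (round y).natAbs ≤ N := by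
  have hr := abs_sub_round y
  have : ((round y).natAbs : ℝ) < N + 1 := by
    rw [Nat.cast_natAbs, Int.cast_abs, abs_lt]
    rw [abs_le] at hy hr
    constructor <;> linarith
  exact Nat.lt_succ_iff.1 (by exact_mod_cast this)

theorem abs_sub_mul_round_div_le {h : ℝ} (hh : 0 < h) (t : ℝ) :
    |t - h * round (t / h)| ≤ h / 2 := by
  have e : t - h * round (t / h) = h * (t / h - round (t / h)) := by field_simp
  rw [e, abs_mul, abs_of_pos hh]
  nlinarith [abs_sub_round (t / h)]

theorem abs_round_sub_round_le_two {a b : ℝ} (hab : |a - b| ≤ 1) : |round a - round b| ≤ 2 := by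
  have ha := abs_sub_round a
  have hb := abs_sub_round b
  rw [abs_le] at ha hb hab
  have : |((round a - round b : ℤ) : ℝ)| ≤ 2 := by
    push_cast
    rw [abs_le]
    constructor <;> linarith
  exact_mod_cast this

theorem EuclideanSpace.norm_le_sqrt_card_mul {ι : Type*} [Fintype ι] {y : EuclideanSpace ℝ ι}
    {c : ℝ} (hc0 : 0 ≤ c) (hc : ∀ i, |y i| ≤ c) : ‖y‖ ≤ √(Fintype.card ι) * c := by
  rw [EuclideanSpace.norm_eq]
  calc √(∑ i, ‖y i‖ ^ 2) ≤ √(∑ _ : ι, c ^ 2) := by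
        gcongr with i
        rw [Real.norm_eq_abs]
        exact hc i
    _ = √(Fintype.card ι) * c := by
        simp [Real.sqrt_mul, Real.sqrt_sq hc0]

section Lattice

variable {s : ℕ}

def latticePt (h : ℝ) (z : Fin s → ℤ) : ℝ^s :=
  h • WithLp.toLp 2 fun i => (z i : ℝ)

@[simp]
theorem latticePt_apply (h : ℝ) (z : Fin s → ℤ) (i : Fin s) : latticePt h z i = h * z i := rfl

@[simp]
theorem latticePt_zero (h : ℝ) : latticePt h (0 : Fin s → ℤ) = 0 := by
  ext i; simp

theorem latticePt_sub (h : ℝ) (z w : Fin s → ℤ) :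
    latticePt h z - latticePt h w = latticePt h (z - w) := by
  ext i; simp [mul_sub]

theorem latticePt_single (h : ℝ) (i : Fin s) (c : ℤ) :
    latticePt h (Pi.single i c) = EuclideanSpace.single i (h * c) := by
  ext j
  by_cases hj : j = i
  · subst hj; simp
  · simp [hj]

def stepTowardZero (z : Fin s → ℤ) : Fin s → ℤ :=
  if h : ∃ i, z i ≠ 0 then z - Pi.single h.choose (z h.choose).sign else z

theorem stepTowardZero_zero : stepTowardZero (0 : Fin s → ℤ) = 0 := by
  simp [stepTowardZero]

theorem exists_stepTowardZero_eq {z : Fin s → ℤ} (hz : z ≠ 0) :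
    ∃ i, z i ≠ 0 ∧ stepTowardZero z = z - Pi.single i (z i).sign := by
  have h : ∃ i, z i ≠ 0 := by simpa [funext_iff] using hz
  exact ⟨h.choose, h.choose_spec, dif_pos h⟩

theorem natAbs_stepTowardZero_le (z : Fin s → ℤ) (j : Fin s) :
    (stepTowardZero z j).natAbs ≤ (z j).natAbs := by
  rcases eq_or_ne z 0 with rfl | hz
  · simp [stepTowardZero_zero]
  obtain ⟨i, hi, hstep⟩ := exists_stepTowardZero_eq hz
  rw [hstep]
  by_cases hj : j = i
  · subst hj; simpa using (Int.natAbs_sub_sign_lt hi).le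
  · simp [hj]

theorem sum_natAbs_stepTowardZero_lt {z : Fin s → ℤ} (hz : z ≠ 0) :
    ∑ j, (stepTowardZero z j).natAbs < ∑ j, (z j).natAbs := by
  obtain ⟨i, hi, hstep⟩ := exists_stepTowardZero_eq hz
  refine Finset.sum_lt_sum (fun j _ => natAbs_stepTowardZero_le z j)
    ⟨i, Finset.mem_univ i, ?_⟩
  simpa [hstep] using Int.natAbs_sub_sign_lt hi

theorem norm_latticePt_sub_stepTowardZero_le {h : ℝ} (hh : 0 ≤ h) (z : Fin s → ℤ) :
    ‖latticePt h z - latticePt h (stepTowardZero z)‖ ≤ h := by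
  rcases eq_or_ne z 0 with rfl | hz
  · simpa [stepTowardZero_zero] using hh
  obtain ⟨i, hi, hstep⟩ := exists_stepTowardZero_eq hz
  rw [hstep, latticePt_sub, sub_sub_cancel, latticePt_single, PiLp.norm_single,
    Real.norm_eq_abs, abs_mul, abs_of_nonneg hh]
  rcases lt_or_gt_of_ne hi with h | h
  · simp [Int.sign_eq_neg_one_of_neg h]
  · simp [Int.sign_eq_one_of_pos h]

theorem eqOn_of_sub_stepTowardZero_eq {S : Set (Fin s → ℤ)}
    (hS : ∀ z ∈ S, stepTowardZero z ∈ S) {u v : (Fin s → ℤ) → ℤ} (h0 : u 0 = v 0)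
    (hstep : ∀ z ∈ S, u z - u (stepTowardZero z) = v z - v (stepTowardZero z)) :
    Set.EqOn u v S := by
  intro z hz
  induction hn : ∑ i, (z i).natAbs using Nat.strong_induction_on generalizing z with
  | _ n ih =>
    rcases eq_or_ne z 0 with rfl | hz0
    · exact h0
    have := ih _ (hn ▸ sum_natAbs_stepTowardZero_lt hz0) (hS z hz) rfl
    linarith [hstep z hz]

def box (s N : ℕ) : Finset (Fin s → ℤ) :=
  Fintype.piFinset fun _ => Finset.Icc (-(N : ℤ)) N

theorem mem_box {N : ℕ} {z : Fin s → ℤ} : z ∈ box s N ↔ ∀ i, (z i).natAbs ≤ N := by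
  simp only [box, Fintype.mem_piFinset, Finset.mem_Icc]
  exact forall_congr' fun i => by omega

theorem card_box (N : ℕ) : (box s N).card = (2 * N + 1) ^ s := by
  simp only [box, Fintype.card_piFinset, Int.card_Icc, Finset.prod_const, Finset.card_univ,
    Fintype.card_fin]
  congr 1
  omega

theorem stepTowardZero_mem_box {N : ℕ} {z : Fin s → ℤ} (hz : z ∈ box s N) :
    stepTowardZero z ∈ box s N :=
  mem_box.2 fun i => (natAbs_stepTowardZero_le z i).trans (mem_box.1 hz i)

end Lattice

section SingleScale

variable {s : ℕ} {f g : ℝ^s → ℝ} {h : ℝ}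

def roundedLatticeValue (f : ℝ^s → ℝ) (h : ℝ) (z : Fin s → ℤ) : ℤ :=
  round (f (latticePt h z) / h)

theorem abs_roundedLatticeValue_sub_stepTowardZero_le (hf : LipschitzWith 1 f) (hh : 0 < h)
    (z : Fin s → ℤ) :
    |roundedLatticeValue f h z - roundedLatticeValue f h (stepTowardZero z)| ≤ 2 := by
  apply abs_round_sub_round_le_two
  rw [← sub_div, abs_div, abs_of_pos hh, div_le_one hh]
  exact (hf.abs_sub_le _ _).trans (norm_latticePt_sub_stepTowardZero_le hh.le z)

theorem abs_sub_le_of_eqOn_box (hf : LipschitzWith 1 f) (hg : LipschitzWith 1 g) (hh : 0 < h)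
    {N : ℕ} (hfg : Set.EqOn (roundedLatticeValue f h) (roundedLatticeValue g h) (box s N))
    {x : ℝ^s} (hx : ‖x‖ ≤ h * N) : |f x - g x| ≤ (√s + 1) * h := by
  set z : Fin s → ℤ := fun i => round (x i / h)
  set p := latticePt h z
  have hz : z ∈ box s N := mem_box.2 fun i => natAbs_round_le <| by
    rw [abs_div, abs_of_pos hh, div_le_iff₀' hh]
    exact (PiLp.norm_apply_le x i).trans hx
  have hxp : ‖x - p‖ ≤ √s * (h / 2) := by
    simpa using EuclideanSpace.norm_le_sqrt_card_mul (y := x - p) (by positivity)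
      fun i => by simpa [p] using abs_sub_mul_round_div_le hh (x i)
  -- `f p` and `g p` both lie within `h / 2` of the same multiple of `h`
  have hp : |f p - g p| ≤ h := by
    have hf' := abs_sub_mul_round_div_le hh (f p)
    have hg' := abs_sub_mul_round_div_le hh (g p)
    have hr : (round (f p / h) : ℝ) = round (g p / h) := by exact_mod_cast hfg hz
    rw [hr] at hf'
    rw [abs_le] at hf' hg' ⊢
    constructor <;> linarith
  have hfx := hf.abs_sub_le x p
  have hgx := hg.abs_sub_le x p
  rw [abs_le] at hfx hgx hp ⊢
  constructor <;> linarith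

end SingleScale

section MultiScale

variable {s : ℕ} {δ ε : ℝ}

-- chosen so that the error `(√s + 1) * scale s δ ε k` of `abs_sub_le_of_eqOn_box` is
-- `ε * (2 ^ k) ^ (1 + δ)`, the least weight on the dyadic shell `2 ^ k ≤ ‖x‖ < 2 ^ (k + 1)`
def scale (s : ℕ) (δ ε : ℝ) (k : ℕ) : ℝ :=
  ε * ((2 : ℝ) ^ k) ^ (1 + δ) / (√s + 1)

def scaleRadius (s : ℕ) (δ ε : ℝ) (k : ℕ) : ℕ :=
  ⌈2 ^ (k + 1) / scale s δ ε k⌉₊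

def gridIndex (s : ℕ) (δ ε : ℝ) (K : ℕ) : Finset (Σ _ : ℕ, Fin s → ℤ) :=
  (Finset.range (K + 1)).sigma fun k => box s (scaleRadius s δ ε k)

def gridIncrements (s : ℕ) (δ ε : ℝ) (K : ℕ) (f : ℝ^s → ℝ) (p : gridIndex s δ ε K) : ℤ :=
  roundedLatticeValue f (scale s δ ε p.1.1) p.1.2 -
    roundedLatticeValue f (scale s δ ε p.1.1) (stepTowardZero p.1.2)

theorem scale_pos (hε : 0 < ε) (k : ℕ) : 0 < scale s δ ε k := by
  unfold scale; positivity

theorem two_pow_div_scale (hε : 0 < ε) (k : ℕ) :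
    2 ^ (k + 1) / scale s δ ε k = 2 * (√s + 1) / ε / (2 ^ δ) ^ k := by
  rw [scale, two_pow_rpow_one_add, pow_succ]
  have : (0 : ℝ) < (2 ^ δ) ^ k := by positivity
  field_simp

theorem abs_gridIncrements_le {K : ℕ} (hε : 0 < ε) {f : ℝ^s → ℝ} (hf : LipschitzWith 1 f)
    (p : gridIndex s δ ε K) : |gridIncrements s δ ε K f p| ≤ 2 :=
  abs_roundedLatticeValue_sub_stepTowardZero_le hf (scale_pos hε _) _

theorem abs_sub_le_of_gridIncrements_eq {K : ℕ} (hδ : 0 < δ) (hε : 0 < ε)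
    (hK : 2 / ε ≤ (2 ^ δ) ^ K) {f g : ℝ^s → ℝ} (hf : LipschitzWith 1 f) (hf0 : f 0 = 0)
    (hg : LipschitzWith 1 g) (hg0 : g 0 = 0)
    (hfg : gridIncrements s δ ε K f = gridIncrements s δ ε K g) (x : ℝ^s) :
    |f x - g x| ≤ ε * (‖x‖ ^ (1 + δ) + 1) := by
  rcases lt_or_ge ‖x‖ (2 ^ (K + 1)) with hx | hx
  · obtain ⟨k, hkK, hxk, hk⟩ := exists_dyadic_scale hx
    have hh := scale_pos (s := s) (δ := δ) hε k
    have heq : Set.EqOn (roundedLatticeValue f (scale s δ ε k))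
        (roundedLatticeValue g (scale s δ ε k)) (box s (scaleRadius s δ ε k)) :=
      eqOn_of_sub_stepTowardZero_eq (fun _ => stepTowardZero_mem_box)
        (by simp [roundedLatticeValue, hf0, hg0]) fun z hz =>
          congrFun hfg ⟨⟨k, z⟩, Finset.mem_sigma.2 ⟨Finset.mem_range.2 (Nat.lt_succ_of_le hkK), hz⟩⟩
    have hxN : ‖x‖ ≤ scale s δ ε k * scaleRadius s δ ε k :=
      hxk.le.trans ((div_le_iff₀' hh).1 (Nat.le_ceil _))
    calc |f x - g x| ≤ (√s + 1) * scale s δ ε k := abs_sub_le_of_eqOn_box hf hg hh heq hxN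
      _ = ε * ((2 : ℝ) ^ k) ^ (1 + δ) := by
          rw [scale]; field_simp
      _ ≤ ε * (max ‖x‖ 1 ^ (1 + δ)) := by gcongr
      _ ≤ ε * (‖x‖ ^ (1 + δ) + 1) := by gcongr; exact max_one_rpow_le (norm_nonneg x)
  · have hfx := hf.abs_le_norm hf0 x
    have hgx := hg.abs_le_norm hg0 x
    have := two_mul_le_of_two_pow_le hδ.le hε hK
      ((pow_le_pow_right₀ one_le_two K.le_succ).trans hx)
    rw [abs_le] at hfx hgx ⊢
    constructor <;> linarith

end MultiScale

section Counting

variable {s : ℕ} {δ ε : ℝ}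

theorem card_gridIndex (K : ℕ) :
    (gridIndex s δ ε K).card = ∑ k ∈ Finset.range (K + 1), (2 * scaleRadius s δ ε k + 1) ^ s := by
  simp [gridIndex, Finset.card_sigma, card_box]

theorem two_mul_scaleRadius_add_one_le (hε : 0 < ε) {k : ℕ} (hk : (2 ^ δ) ^ k ≤ 4 / ε) :
    (2 * scaleRadius s δ ε k + 1 : ℝ) ≤ 16 * (√s + 1) / ε / (2 ^ δ) ^ k := by
  have hQ : (0 : ℝ) < (2 ^ δ) ^ k := by positivity
  have hN : (scaleRadius s δ ε k : ℝ) < 2 * (√s + 1) / ε / (2 ^ δ) ^ k + 1 := by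
    rw [scaleRadius, ← two_pow_div_scale hε]
    exact Nat.ceil_lt_add_one (div_nonneg (by positivity) (scale_pos hε k).le)
  set y := 2 * (√s + 1) / ε / (2 ^ δ) ^ k
  -- absorbs the `+ 1` of the ceiling into a multiple of `y`
  have hy : 1 / 2 ≤ y := by
    rw [le_div_iff₀ hQ]
    calc 1 / 2 * (2 ^ δ) ^ k ≤ 2 / ε := by linarith [hk.trans_eq (by ring : 4 / ε = 2 * (2 / ε))]
      _ ≤ 2 * (√s + 1) / ε := by gcongr; linarith [Real.sqrt_nonneg s]
  have : 16 * (√s + 1) / ε / (2 ^ δ) ^ k = 8 * y := by ring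
  linarith

theorem sum_inv_two_rpow_pow_le (hδ0 : 0 < δ) (hδ1 : δ ≤ 1) (n : ℕ) :
    ∑ k ∈ Finset.range n, ((2 : ℝ) ^ δ)⁻¹ ^ k ≤ 4 / δ := by
  have hQ := one_add_half_le_two_rpow hδ0.le
  have hQ0 : (0 : ℝ) < 2 ^ δ := by positivity
  have hinv : ((2 : ℝ) ^ δ)⁻¹ ≤ 1 - δ / 4 := by
    rw [inv_le_iff_one_le_mul₀' hQ0]
    nlinarith
  rw [Finset.range_eq_Ico]
  refine (geom_sum_Ico_le_of_lt_one (by positivity) (by linarith)).trans ?_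
  rw [pow_zero, div_le_div_iff₀ (by linarith) hδ0]
  linarith

theorem card_gridIndex_le (hs : 1 ≤ s) (hδ0 : 0 < δ) (hδ1 : δ ≤ 1) (hε : 0 < ε) {K : ℕ}
    (hK : (2 ^ δ) ^ K ≤ 4 / ε) :
    ((gridIndex s δ ε K).card : ℝ) ≤ (16 * (√s + 1) / ε) ^ s * (4 / δ) := by
  have hQ1 : (1 : ℝ) ≤ 2 ^ δ := Real.one_le_rpow one_le_two hδ0.le
  rw [card_gridIndex]
  push_cast
  calc ∑ k ∈ Finset.range (K + 1), (2 * (scaleRadius s δ ε k : ℝ) + 1) ^ s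
      ≤ ∑ k ∈ Finset.range (K + 1), (16 * (√s + 1) / ε) ^ s * ((2 : ℝ) ^ δ)⁻¹ ^ k := by
        gcongr with k hk
        have hkK : (2 ^ δ) ^ k ≤ 4 / ε :=
          (pow_le_pow_right₀ hQ1 (Nat.lt_succ_iff.1 (Finset.mem_range.1 hk))).trans hK
        calc (2 * (scaleRadius s δ ε k : ℝ) + 1) ^ s
            ≤ (16 * (√s + 1) / ε / (2 ^ δ) ^ k) ^ s := by
              gcongr; exact two_mul_scaleRadius_add_one_le hε hkK
          _ = (16 * (√s + 1) / ε) ^ s * (((2 : ℝ) ^ δ)⁻¹ ^ k) ^ s := by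
              rw [div_eq_mul_inv, mul_pow, ← inv_pow]
          _ ≤ (16 * (√s + 1) / ε) ^ s * ((2 : ℝ) ^ δ)⁻¹ ^ k := by
              gcongr
              exact pow_le_of_le_one (by positivity) (pow_le_one₀ (by positivity)
                (inv_le_one_of_one_le₀ hQ1)) (by omega)
    _ = (16 * (√s + 1) / ε) ^ s * ∑ k ∈ Finset.range (K + 1), ((2 : ℝ) ^ δ)⁻¹ ^ k := by
        rw [Finset.mul_sum]
    _ ≤ (16 * (√s + 1) / ε) ^ s * (4 / δ) := by
        gcongr; exact sum_inv_two_rpow_pow_le hδ0 hδ1 _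

theorem eight_mul_pow_le (hs : 1 ≤ s) (hε : 0 < ε) :
    8 * (16 * (√s + 1) / ε) ^ s ≤ (256 * √s / ε) ^ s := by
  have hsqrt : 1 ≤ √(s : ℝ) := Real.one_le_sqrt.2 (by exact_mod_cast hs)
  have h16 : 16 * (√s + 1) / ε ≤ 32 * √s / ε := div_le_div_of_nonneg_right (by linarith) hε.le
  calc 8 * (16 * (√s + 1) / ε) ^ s ≤ 8 ^ s * (32 * √s / ε) ^ s :=
        mul_le_mul (le_self_pow₀ (by norm_num) (by omega)) (pow_le_pow_left₀ (by positivity) h16 s)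
          (by positivity) (by positivity)
    _ = (256 * √s / ε) ^ s := by
        rw [← mul_pow]; ring_nf

theorem five_le_exp_two : (5 : ℝ) ≤ Real.exp 2 := by
  have h := Real.exp_one_gt_d9
  have : Real.exp 2 = Real.exp 1 * Real.exp 1 := by rw [← Real.exp_add]; norm_num
  nlinarith

end Counting

abbrev LipschitzZero (s : ℕ) : Type := {f : ℝ^s → ℝ // LipschitzWith 1 f ∧ f 0 = 0}

section Main

variable {s : ℕ} {δ ε : ℝ}

theorem coverN_weightedDist_le_one (hδ : 0 ≤ δ) (hε0 : 0 ≤ ε) (h : 1 ≤ ε ∨ s = 0) :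
    coverN (fun f g : LipschitzZero s => weightedDist δ f.1 g.1) ε ≤ 1 := by
  let zero : LipschitzZero s := ⟨fun _ => 0, (LipschitzWith.const 0).weaken zero_le_one, rfl⟩
  refine (coverN_le_ncard (Set.finite_singleton zero)
    fun f => ⟨zero, rfl, weightedDist_le fun x => ?_⟩).trans (by simp)
  rcases h with hε | rfl
  · calc |f.1 x - 0| ≤ ‖x‖ := by simpa using f.2.1.abs_le_norm f.2.2 x
      _ ≤ ‖x‖ ^ (1 + δ) + 1 := le_rpow_one_add_add_one (norm_nonneg x) hδ
      _ ≤ ε * (‖x‖ ^ (1 + δ) + 1) := le_mul_of_one_le_left (by positivity) hε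
  · rw [Subsingleton.elim x 0, f.2.2, sub_zero, abs_zero]
    exact mul_nonneg hε0 (by positivity)

theorem coverN_weightedDist_le_five_pow {K : ℕ} (hδ : 0 < δ) (hε : 0 < ε)
    (hK : 2 / ε ≤ (2 ^ δ) ^ K) :
    coverN (fun f g : LipschitzZero s => weightedDist δ f.1 g.1) ε ≤
      (5 ^ (gridIndex s δ ε K).card : ℕ) := by
  have hcov := coverN_le_card (ρ := fun f g : LipschitzZero s => weightedDist δ f.1 g.1)
    (Fintype.piFinset fun _ : gridIndex s δ ε K => Finset.Icc (-2 : ℤ) 2)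
    (fun f => gridIncrements s δ ε K f.1)
    (fun f => Fintype.mem_piFinset.2 fun p =>
      Finset.mem_Icc.2 (abs_le.1 (abs_gridIncrements_le hε f.2.1 p)))
    fun f g hfg => weightedDist_le
      (abs_sub_le_of_gridIncrements_eq hδ hε hK f.2.1 f.2.2 g.2.1 g.2.2 hfg)
  rwa [Fintype.card_piFinset, Finset.prod_const, Int.card_Icc, Finset.card_univ,
    Fintype.card_coe] at hcov

theorem five_pow_card_gridIndex_le (hs : 1 ≤ s) (hδ0 : 0 < δ) (hδ1 : δ ≤ 1) (hε : 0 < ε)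
    {K : ℕ} (hK : (2 ^ δ) ^ K ≤ 4 / ε) :
    ((5 ^ (gridIndex s δ ε K).card : ℕ) : ℝ) ≤ Real.exp ((256 * √s / ε) ^ s * (1 / δ)) := by
  set n := (gridIndex s δ ε K).card
  have hn := card_gridIndex_le hs hδ0 hδ1 hε hK
  calc ((5 ^ n : ℕ) : ℝ) = 5 ^ n := by norm_num
    _ ≤ Real.exp 2 ^ n := by gcongr; exact five_le_exp_two
    _ = Real.exp (2 * n) := by rw [← Real.exp_nat_mul]; ring_nf
    _ ≤ Real.exp (8 * (16 * (√s + 1) / ε) ^ s * (1 / δ)) := by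
        rw [Real.exp_le_exp]
        calc 2 * (n : ℝ) ≤ 2 * ((16 * (√s + 1) / ε) ^ s * (4 / δ)) := by gcongr
          _ = 8 * (16 * (√s + 1) / ε) ^ s * (1 / δ) := by ring
    _ ≤ Real.exp ((256 * √s / ε) ^ s * (1 / δ)) := by
        gcongr; exact eight_mul_pow_le hs hε

theorem coverN_weightedDist_le (hs : 1 ≤ s) (hδ0 : 0 < δ) (hδ1 : δ ≤ 1) (hε0 : 0 < ε)
    (hε1 : ε ≤ 1) :
    coverN (fun f g : LipschitzZero s => weightedDist δ f.1 g.1) ε ≤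
      ENNReal.ofReal (Real.exp ((256 * √s / ε) ^ s * (1 / δ))) := by
  have hQ1 : 1 < (2 : ℝ) ^ δ := Real.one_lt_rpow one_lt_two hδ0
  have hQ2 : (2 : ℝ) ^ δ ≤ 2 := by
    simpa using Real.rpow_le_rpow_of_exponent_le one_le_two hδ1
  obtain ⟨K, hK2, hK4⟩ :=
    exists_pow_mem_Icc hQ1 hQ2 (c := 2 / ε) (by rw [le_div_iff₀ hε0]; linarith)
  refine (coverN_weightedDist_le_five_pow hδ0 hε0 hK2).trans ?_
  rw [← ENNReal.ofReal_natCast]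
  exact ENNReal.ofReal_le_ofReal
    (five_pow_card_gridIndex_le hs hδ0 hδ1 hε0 (hK4.trans_eq (by ring)))

end Main

/-- Covering numbers of the set of 1-Lipschitz functions on `ℝ^s` vanishing at the origin,
with respect to the weighted supremum norm `‖f‖_(δ)` (Lemma 2.4 of the paper), stated in the
equivalent exponentiated form `N ≤ exp((C√s/ε)^s / δ)`. -/
theorem covering_lipschitz_weighted :
    ∃ C : ℝ, 1 ≤ C ∧
      ∀ (s : ℕ) (δ : ℝ), 0 < δ → δ ≤ 1 → ∀ ε : ℝ, 0 < ε →
        coverN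
          (fun f g : {f : EuclideanSpace ℝ (Fin s) → ℝ // LipschitzWith 1 f ∧ f 0 = 0} =>
            ⨆ x : EuclideanSpace ℝ (Fin s), |f.1 x - g.1 x| / (‖x‖ ^ (1 + δ) + 1)) ε
          ≤ ENNReal.ofReal (Real.exp ((C * Real.sqrt s / ε) ^ s * (1 / δ))) := by
  refine ⟨256, by norm_num, fun s δ hδ0 hδ1 ε hε0 => ?_⟩
  by_cases h : 1 ≤ ε ∨ s = 0
  · refine (coverN_weightedDist_le_one hδ0.le hε0.le h).trans ?_
    rw [← ENNReal.ofReal_one]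
    exact ENNReal.ofReal_le_ofReal (Real.one_le_exp (by positivity))
  · push Not at h
    exact coverN_weightedDist_le (Nat.one_le_iff_ne_zero.2 h.2) hδ0 hδ1 hε0 h.1.le

end
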